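/- The hidden features are recovered from the observable features and the ghost bits as follows (Eq. (7) of the paper): (a) for every i with 1 ≤ i < ι 0, φ* i = φ i * ∏_{j : Fin m} (2 * b (ι j) − 1); (b) for every k with k + 1 ≤ m − 1 and every i with ι k < i < ι (k+1), φ* (i − (k+1)) = φ i * ∏_{j : Fin m, j ≥ k+1} (2 * b (ι j) − 1); (c) for every i with ι (m−1) < i ≤ n + m, φ* (i − m) = φ i. -/

import Mathlib

/-!
Let `s k` be the number of ghost positions below `k`. The interface says that a non-ghost
position `k` carries the hidden bit `c (k - s k)`, and `k ↦ k - s k` maps the non-ghost positions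
of `[i, n + m]` onto `[i - s i, n]` without gaps, so `φ* (i - s i)` is the product of the
observable signs over the non-ghost positions of `[i, n + m]`. The feature `φ i` is this
product times the signs of the ghosts `ι j` with `s i ≤ j`; each sign squares to `1`, so
multiplying `φ i` by them once more gives `φ* (i - s i)`. The three claims are the cases
`s i = 0`, `s i = k + 1` and `s i = m`.
-/

open Finset Function

variable {M : Type*} [CommMonoid M]

section Compression

variable (p : ℕ → Prop) [DecidablePred p]

theorem Nat.monotone_sub_count : Monotone fun k => k - Nat.count p k := by
  refine monotone_nat_of_le_succ fun k => ?_
  have := Nat.count_le p (n := k)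
  rw [Nat.count_succ]
  split_ifs <;> omega

theorem Finset.prod_Ico_sub_count {u v : ℕ → M} {i E : ℕ} (hiE : i ≤ E)
    (h : ∀ k ∈ Ico i E, ¬ p k → v (k - Nat.count p k) = u k) :
    ∏ k ∈ Ico (i - Nat.count p i) (E - Nat.count p E), v k =
      ∏ k ∈ Ico i E with ¬ p k, u k := by
  induction E, hiE using Nat.le_induction with
  | base => simp
  | succ E hiE ih =>
    have h' : ∀ k ∈ Ico i E, ¬ p k → v (k - Nat.count p k) = u k :=
      fun k hk => h k (Ico_subset_Ico_right E.le_succ hk)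
    rw [Nat.Ico_succ_right_eq_insert_Ico hiE, filter_insert, Nat.count_succ]
    by_cases hE : p E
    · simp only [hE, if_true, not_true_eq_false, if_false]
      rw [Nat.add_sub_add_right, ih h']
    · have hcount := Nat.count_le p (n := E)
      simp only [hE, if_false, not_false_eq_true, if_true, add_zero]
      rw [show E + 1 - Nat.count p E = E - Nat.count p E + 1 by omega,
        prod_Ico_succ_top (Nat.monotone_sub_count p hiE), ih h',
        prod_insert (by simp), mul_comm, h E (by simp [hiE]) hE]

end Compression

section Enumeration

variable {m : ℕ} {ι : Fin m → ℕ}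

theorem Nat.count_mem_range_eq_card (hι : Injective ι) (k : ℕ) :
    Nat.count (· ∈ Set.range ι) k = #{j | ι j < k} := by
  rw [Nat.count_eq_card_filter_range, ← card_preimage _ _ hι.injOn]
  congr 1
  ext j
  simp

theorem Nat.count_mem_range_le (hι : Injective ι) (k : ℕ) :
    Nat.count (· ∈ Set.range ι) k ≤ m := by
  rw [Nat.count_mem_range_eq_card hι]
  exact (card_filter_le _ _).trans_eq (Finset.card_fin m)

theorem StrictMono.count_mem_range_apply (hι : StrictMono ι) (j : Fin m) :
    Nat.count (· ∈ Set.range ι) (ι j) = j := by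
  simp only [Nat.count_mem_range_eq_card hι.injective, hι.lt_iff_lt, filter_gt_eq_Iio,
    Fin.card_Iio]

theorem StrictMono.lt_count_mem_range_iff (hι : StrictMono ι) (j : Fin m) (k : ℕ) :
    (j : ℕ) < Nat.count (· ∈ Set.range ι) k ↔ ι j < k := by
  constructor
  · intro hj
    by_contra! hk
    have := Nat.count_monotone (· ∈ Set.range ι) hk
    rw [hι.count_mem_range_apply] at this
    omega
  · intro hk
    have := Nat.count_monotone (· ∈ Set.range ι) (Nat.succ_le_of_lt hk)
    rw [Nat.count_succ, hι.count_mem_range_apply, if_pos (Set.mem_range_self j)] at this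
    omega

theorem StrictMono.prod_Icc_eq_prod_not_mem_range_mul (hι : StrictMono ι) {N : ℕ}
    (hN : ∀ j, ι j ≤ N) (w : ℕ → M) (i : ℕ) :
    ∏ k ∈ Icc i N, w k = (∏ k ∈ Icc i N with k ∉ Set.range ι, w k) *
      ∏ j ∈ univ.filter fun j : Fin m => Nat.count (· ∈ Set.range ι) i ≤ j, w (ι j) := by
  rw [← prod_filter_mul_prod_filter_not (Icc i N) (· ∈ Set.range ι), mul_comm,
    ← prod_preimage' ι _ hι.injective.injOn]
  congr 2
  ext j
  simp only [mem_preimage, mem_Icc, hN j, and_true, mem_filter, mem_univ, true_and]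
  rw [← not_lt, ← hι.lt_count_mem_range_iff, not_lt]

end Enumeration

section PlusBits

variable {n m : ℕ} {ι : Fin m → ℕ} {b c : ℕ → ℤ}

theorem plusBits_interface_eq_count (hm : 1 ≤ m) (hmono : StrictMono ι)
    (hc1 : ∀ i, 1 ≤ i → i < ι ⟨0, hm⟩ → c i = b i)
    (hc2 : ∀ k (hk : k + 1 < m), ∀ i,
      ι ⟨k, Nat.lt_of_succ_lt hk⟩ < i → i < ι ⟨k + 1, hk⟩ → c (i - (k + 1)) = b i)
    (hc3 : ∀ i, ι ⟨m - 1, Nat.sub_one_lt_of_lt hm⟩ < i → i ≤ n + m → c (i - m) = b i)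
    {k : ℕ} (hk1 : 1 ≤ k) (hkn : k ≤ n + m) (hk : k ∉ Set.range ι) :
    c (k - Nat.count (· ∈ Set.range ι) k) = b k := by
  have hlt := hmono.lt_count_mem_range_iff (k := k)
  have hle := Nat.count_mem_range_le hmono.injective k
  have hne : ∀ j, ι j ≠ k := fun j hj => hk ⟨j, hj⟩
  obtain ⟨s, hs⟩ : ∃ s, Nat.count (· ∈ Set.range ι) k = s := ⟨_, rfl⟩
  rw [hs] at hlt hle ⊢
  rcases s with _ | t
  · have h0 := mt (hlt ⟨0, hm⟩).2 (lt_irrefl 0)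
    simpa using hc1 k hk1 (lt_of_le_of_ne (not_lt.1 h0) (hne _).symm)
  · by_cases ht : t + 1 < m
    · have hlo := (hlt ⟨t, by omega⟩).1 (Nat.lt_succ_self t)
      have hhi := mt (hlt ⟨t + 1, ht⟩).2 (lt_irrefl _)
      exact hc2 t ht k hlo (lt_of_le_of_ne (not_lt.1 hhi) (hne _).symm)
    · have hlo := (hlt ⟨m - 1, by omega⟩).1 (by simp only; omega)
      rw [show t + 1 = m by omega]
      exact hc3 k hlo hkn

theorem prod_hidden_eq_prod_observable_mul (hmono : StrictMono ι) (hle : ∀ j, ι j ≤ n + m)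
    (hb : ∀ k, b k = 0 ∨ b k = 1)
    (hc : ∀ k, 1 ≤ k → k ≤ n + m → k ∉ Set.range ι →
      c (k - Nat.count (· ∈ Set.range ι) k) = b k)
    {i : ℕ} (hi1 : 1 ≤ i) (hi : i ≤ n + m + 1) :
    ∏ k ∈ Icc (i - Nat.count (· ∈ Set.range ι) i) n, (2 * c k - 1) =
      (∏ k ∈ Icc i (n + m), (2 * b k - 1)) *
        ∏ j ∈ univ.filter fun j : Fin m => Nat.count (· ∈ Set.range ι) i ≤ j,
          (2 * b (ι j) - 1) := by
  have hcount : Nat.count (· ∈ Set.range ι) (n + m + 1) = m := by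
    rw [Nat.count_mem_range_eq_card hmono.injective,
      filter_true_of_mem fun j _ => Nat.lt_succ_of_le (hle j), card_univ, Fintype.card_fin]
  have hsq : ∀ k, (2 * b k - 1) * (2 * b k - 1) = 1 := fun k => by
    rcases hb k with h | h <;> rw [h] <;> norm_num
  have hnon : ∏ k ∈ Icc (i - Nat.count (· ∈ Set.range ι) i) n, (2 * c k - 1) =
      ∏ k ∈ Icc i (n + m) with k ∉ Set.range ι, (2 * b k - 1) := by
    rw [← Ico_add_one_right_eq_Icc, ← Ico_add_one_right_eq_Icc,
      show n + 1 = n + m + 1 - Nat.count (· ∈ Set.range ι) (n + m + 1) by omega]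
    refine prod_Ico_sub_count _ hi fun k hk hkι => ?_
    rw [mem_Ico] at hk
    rw [hc k (by omega) (by omega) hkι]
  rw [hnon, hmono.prod_Icc_eq_prod_not_mem_range_mul hle, mul_assoc, ← prod_mul_distrib,
    prod_eq_one fun j _ => hsq (ι j), mul_one]

end PlusBits

/-- Eq. (7) of the paper: the hidden features are recovered
from the observable features and the ghost bits. -/
theorem stmt4 (n m : ℕ) (hm : 1 ≤ m)
    (ι : Fin m → ℕ) (hmono : StrictMono ι)
    (hlast : ι ⟨m - 1, by omega⟩ ≤ n + m)
    (b : ℕ → ℤ) (hb : ∀ k, b k = 0 ∨ b k = 1)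
    (c : ℕ → ℤ)
    (hc1 : ∀ i, 1 ≤ i → i < ι ⟨0, hm⟩ → c i = b i)
    (hc2 : ∀ k (hk : k + 1 ≤ m - 1), ∀ i,
      ι ⟨k, by omega⟩ < i → i < ι ⟨k + 1, by omega⟩ → c (i - (k + 1)) = b i)
    (hc3 : ∀ i, ι ⟨m - 1, by omega⟩ < i → i ≤ n + m → c (i - m) = b i)
    (φs : ℕ → ℤ) (hφs : ∀ i, φs i = ∏ k ∈ Finset.Icc i n, (2 * c k - 1))
    (φ : ℕ → ℤ) (hφ : ∀ i, φ i = ∏ k ∈ Finset.Icc i (n + m), (2 * b k - 1)) :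
    (∀ i, 1 ≤ i → i < ι ⟨0, hm⟩ →
      φs i = φ i * ∏ j : Fin m, (2 * b (ι j) - 1)) ∧
    (∀ k (hk : k + 1 ≤ m - 1), ∀ i,
      ι ⟨k, by omega⟩ < i → i < ι ⟨k + 1, by omega⟩ →
      φs (i - (k + 1)) = φ i *
        ∏ j ∈ Finset.univ.filter (fun j : Fin m => k + 1 ≤ (j : ℕ)),
          (2 * b (ι j) - 1)) ∧
    (∀ i, ι ⟨m - 1, by omega⟩ < i → i ≤ n + m → φs (i - m) = φ i) := by
  have hle : ∀ j, ι j ≤ n + m := fun j =>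
    (hmono.monotone (Fin.le_iff_val_le_val.2 (by simp only; omega))).trans hlast
  have hc := fun k => plusBits_interface_eq_count (n := n) hm hmono hc1
    (fun k hk => hc2 k (by omega)) hc3 (k := k)
  have key := fun {i} => prod_hidden_eq_prod_observable_mul (i := i) hmono hle hb hc
  have hlt := hmono.lt_count_mem_range_iff
  refine ⟨fun i hi1 hi => ?_, fun k hk i hki hik => ?_, fun i hli hi => ?_⟩
  · have hs : Nat.count (· ∈ Set.range ι) i = 0 :=
      Nat.eq_zero_of_not_pos (mt (hlt ⟨0, hm⟩ i).1 (not_lt.2 hi.le))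
    have hall : (univ.filter fun j : Fin m => 0 ≤ (j : ℕ)) = univ :=
      filter_true_of_mem fun j _ => Nat.zero_le j
    have hk := key hi1 (by have := hle ⟨0, hm⟩; omega)
    rwa [hs, Nat.sub_zero, hall, ← hφs, ← hφ] at hk
  · have hlo := (hlt ⟨k, by omega⟩ i).2 hki
    have hhi := mt (hlt ⟨k + 1, by omega⟩ i).1 (not_lt.2 hik.le)
    have hs : Nat.count (· ∈ Set.range ι) i = k + 1 := by simp only at hlo hhi; omega
    rw [hφs, hφ, ← hs]
    exact key (by omega) (by have := hle ⟨k + 1, by omega⟩; omega)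
  · have hs : Nat.count (· ∈ Set.range ι) i = m :=
      le_antisymm (Nat.count_mem_range_le hmono.injective i)
        (by have := (hlt ⟨m - 1, by omega⟩ i).2 hli; simp only at this; omega)
    have hempty : (univ.filter fun j : Fin m => m ≤ (j : ℕ)) = ∅ :=
      filter_false_of_mem fun j _ => not_le.2 j.isLt
    have hk := key (i := i) (by omega) (by omega)
    rwa [hs, hempty, prod_empty, mul_one, ← hφs, ← hφ] at hk
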